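/- With the weighted-graph and unit potential flow setup below, the electric flow state |f⟩ satisfies: (i) ‖|f⟩‖ = 1; (ii) |f⟩ is antisymmetric, i.e. Π₊|f⟩ = 0; (iii) ⟨φ_s|f⟩ = 1/√(2 R_s d_s), equivalently √(d_s)⟨φ_s|f⟩ = 1/√(2R_s); (iv) ⟨φ_x|f⟩ = 0 for every x ∉ {s} ∪ M; and (v) Σ_{m ∈ M} √(d_m) ⟨φ_m|f⟩ = −1/√(2R_s). -/

import Mathlib

open scoped InnerProductSpace BigOperators

namespace Elfs

variable {V : Type*} [Fintype V] [DecidableEq V]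

/-- The degree of a vertex: `d_x = Σ_y w_{xy}`. -/
noncomputable def deg (w : V → V → ℝ) (x : V) : ℝ := ∑ y, w x y

/-- The basis state `|xy⟩` of the edge space. -/
noncomputable def ket (p : V × V) : EuclideanSpace ℂ (V × V) :=
  EuclideanSpace.single p 1

/-- The star state `|φ_x⟩ = (1/√d_x) Σ_y √(w_{xy}) |xy⟩`. -/
noncomputable def starState (w : V → V → ℝ) (x : V) : EuclideanSpace ℂ (V × V) :=
  ((Real.sqrt (deg w x) : ℂ))⁻¹ • ∑ y, ((Real.sqrt (w x y) : ℝ) : ℂ) • ket (x, y)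

/-- The electric flow state `|f⟩ = (1/√(2 R_s)) Σ_{(x,y)} (f_{xy}/√(w_{xy})) |xy⟩`
for the potential flow `f_{xy} = w_{xy}(v_x − v_y)` (terms with `w_{xy} = 0` contribute `0`,
matching the restriction of the sum to edges of positive weight). -/
noncomputable def flowState (w : V → V → ℝ) (v : V → ℝ) (s : V) :
    EuclideanSpace ℂ (V × V) :=
  ((Real.sqrt (2 * v s) : ℂ))⁻¹ •
    ∑ p : V × V, ((w p.1 p.2 * (v p.1 - v p.2) / Real.sqrt (w p.1 p.2) : ℝ) : ℂ) • ket p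

/-- The symmetric subspace `span{|xy⟩ + |yx⟩ : (x,y) ∈ E}`. -/
noncomputable def symSpan (E : Set (V × V)) : Submodule ℂ (EuclideanSpace ℂ (V × V)) :=
  Submodule.span ℂ {u | ∃ p ∈ E, u = ket p + ket p.swap}

/-- `Π₊`, the orthogonal projection onto the symmetric subspace. -/
noncomputable def projSym (E : Set (V × V)) :
    EuclideanSpace ℂ (V × V) →ₗ[ℂ] EuclideanSpace ℂ (V × V) :=
  (symSpan E).subtype ∘ₗ (Submodule.orthogonalProjection (symSpan E)).toLinearMap

end Elfs

open Elfs

/-!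
The amplitude of `|f⟩` on `|xy⟩` is `√w_{xy} (v_x - v_y) / √(2 R_s)`, which changes sign under
`(x, y) ↦ (y, x)`; hence `|f⟩` is orthogonal to every `|xy⟩ + |yx⟩`. Pairing with a star state
gives `⟨φ_x|f⟩ = (Σ_y f_{xy}) / √(2 R_s d_x)`, so (iii)–(v) are the flow demands, the sink total
being `-1` because the net flows of an antisymmetric flow sum to zero. Finally `2 R_s ‖f‖²` is the
energy `Σ_{x,y} w_{xy} (v_x - v_y)² = 2 Σ_x v_x Σ_y f_{xy}`, and only `x = s` contributes to the
right-hand side, since `v` vanishes on `M` and the net flow vanishes off `{s} ∪ M`.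
-/

namespace Elfs

variable {V : Type*} [Fintype V]

def netFlow (w : V → V → ℝ) (v : V → ℝ) (x : V) : ℝ := ∑ y, w x y * (v x - v y)

lemma sum_sum_eq_zero_of_antisymm {g : V → V → ℝ} (hg : ∀ x y, g x y = -g y x) :
    ∑ x, ∑ y, g x y = 0 := by
  have h : ∑ x, ∑ y, g x y = ∑ x, ∑ y, -g x y := by
    rw [Finset.sum_comm]
    exact Finset.sum_congr rfl fun y _ => Finset.sum_congr rfl fun x _ => hg x y
  simp only [Finset.sum_neg_distrib] at h
  linarith

section Potential

variable {w : V → V → ℝ} {v : V → ℝ}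

lemma sum_netFlow_eq_zero (hw : ∀ x y, w x y = w y x) : ∑ x, netFlow w v x = 0 :=
  sum_sum_eq_zero_of_antisymm fun x y => by rw [hw]; ring

lemma sum_sum_mul_sub_sq_eq_two_mul_sum (hw : ∀ x y, w x y = w y x) :
    ∑ x, ∑ y, w x y * (v x - v y) ^ 2 = 2 * ∑ x, v x * netFlow w v x := by
  have hanti : ∑ x, ∑ y, w x y * (v x - v y) * (v x + v y) = 0 :=
    sum_sum_eq_zero_of_antisymm fun x y => by rw [hw]; ring
  calc ∑ x, ∑ y, w x y * (v x - v y) ^ 2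
      = ∑ x, ∑ y, (2 * (v x * (w x y * (v x - v y))) - w x y * (v x - v y) * (v x + v y)) := by
        congr! 2; ring
    _ = 2 * ∑ x, v x * netFlow w v x := by
        simp only [Finset.sum_sub_distrib, hanti, netFlow, Finset.mul_sum, sub_zero]

variable {s : V} {M : Finset V}

lemma sum_mul_netFlow_eq (hvM : ∀ y ∈ M, v y = 0) (hunit : netFlow w v s = 1)
    (hcons : ∀ x, x ≠ s → x ∉ M → netFlow w v x = 0) :
    ∑ x, v x * netFlow w v x = v s := by
  rw [Finset.sum_eq_single_of_mem s (Finset.mem_univ s), hunit, mul_one]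
  intro x _ hxs
  by_cases hxM : x ∈ M
  · rw [hvM x hxM, zero_mul]
  · rw [hcons x hxs hxM, mul_zero]

lemma sum_netFlow_sink_eq_neg_one (hw : ∀ x y, w x y = w y x) (hsM : s ∉ M)
    (hunit : netFlow w v s = 1) (hcons : ∀ x, x ≠ s → x ∉ M → netFlow w v x = 0) :
    ∑ m ∈ M, netFlow w v m = -1 := by
  classical
  have hout : ∑ x ∈ Mᶜ, netFlow w v x = 1 := by
    rw [Finset.sum_eq_single_of_mem s (Finset.mem_compl.2 hsM) fun x hx hxs =>
      hcons x hxs (Finset.mem_compl.1 hx), hunit]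
  have := Finset.sum_add_sum_compl M (netFlow w v)
  rw [hout, sum_netFlow_eq_zero hw] at this
  linarith

end Potential

lemma mem_orthogonal_span_of_inner_eq_zero {𝕜 E : Type*} [RCLike 𝕜] [NormedAddCommGroup E]
    [InnerProductSpace 𝕜 E] {S : Set E} {u : E} (h : ∀ t ∈ S, ⟪t, u⟫_𝕜 = 0) :
    u ∈ (Submodule.span 𝕜 S)ᗮ := by
  have : Submodule.span 𝕜 S ≤ (𝕜 ∙ u)ᗮ := Submodule.span_le.2 fun t ht =>
    Submodule.mem_orthogonal_singleton_iff_inner_left.2 (h t ht)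
  exact (Submodule.orthogonal_gc 𝕜 E).le_iff_le.2 this (Submodule.mem_span_singleton_self u)

variable [DecidableEq V]

lemma sum_smul_ket_apply (c : V × V → ℂ) (q : V × V) : (∑ p, c p • ket p) q = c q := by
  simp [ket, Pi.single_apply]

lemma inner_ket_left (p : V × V) (u : EuclideanSpace ℂ (V × V)) : ⟪ket p, u⟫_ℂ = u p := by
  simp [ket, EuclideanSpace.inner_single_left]

lemma projSym_eq_zero_of_mem_orthogonal {E : Set (V × V)} {u : EuclideanSpace ℂ (V × V)}
    (hu : u ∈ (symSpan E)ᗮ) : projSym E u = 0 := by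
  simp [projSym, Submodule.orthogonalProjectionOnto_apply_of_mem_orthogonal hu]

section FlowState

variable {w : V → V → ℝ} {v : V → ℝ} {s : V}

-- `Real.div_sqrt` (`x / √x = √x`) holds also at `x = 0`, so pairs of weight zero need no care.
lemma flowState_apply (q : V × V) :
    flowState w v s q = (((√(2 * v s))⁻¹ * (√(w q.1 q.2) * (v q.1 - v q.2)) : ℝ) : ℂ) := by
  rw [flowState, PiLp.smul_apply, sum_smul_ket_apply, smul_eq_mul, mul_div_right_comm,
    Real.div_sqrt]
  push_cast
  ring

lemma inner_starState_flowState (hw0 : ∀ x y, 0 ≤ w x y) (x : V) :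
    ⟪starState w x, flowState w v s⟫_ℂ =
      (((√(deg w x))⁻¹ * (√(2 * v s))⁻¹ * netFlow w v x : ℝ) : ℂ) := by
  have hterm : ∀ y, √(w x y) * ((√(2 * v s))⁻¹ * (√(w x y) * (v x - v y))) =
      (√(2 * v s))⁻¹ * (w x y * (v x - v y)) := fun y => by
    rw [mul_left_comm, ← mul_assoc (√(w x y)), Real.mul_self_sqrt (hw0 x y)]
  simp only [starState, inner_smul_left, sum_inner, inner_ket_left, flowState_apply,
    Complex.conj_ofReal, ← Complex.ofReal_mul, hterm, map_inv₀]
  rw [← Complex.ofReal_sum, ← Finset.mul_sum, netFlow]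
  push_cast
  ring

lemma sqrt_deg_mul_inner_starState_flowState (hw0 : ∀ x y, 0 ≤ w x y) {x : V}
    (hx : 0 < deg w x) :
    ((√(deg w x) : ℝ) : ℂ) * ⟪starState w x, flowState w v s⟫_ℂ =
      (((√(2 * v s))⁻¹ * netFlow w v x : ℝ) : ℂ) := by
  rw [inner_starState_flowState hw0, ← Complex.ofReal_mul, ← mul_assoc, ← mul_assoc,
    mul_inv_cancel₀ (Real.sqrt_pos.2 hx).ne', one_mul]

lemma norm_flowState_sq (hw0 : ∀ x y, 0 ≤ w x y) (hv : 0 ≤ v s) :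
    ‖flowState w v s‖ ^ 2 = (2 * v s)⁻¹ * ∑ x, ∑ y, w x y * (v x - v y) ^ 2 := by
  simp only [EuclideanSpace.norm_sq_eq, flowState_apply, Complex.norm_real, Real.norm_eq_abs,
    sq_abs, mul_pow, inv_pow, Real.sq_sqrt (by linarith : 0 ≤ 2 * v s),
    fun x y => Real.sq_sqrt (hw0 x y)]
  rw [Fintype.sum_prod_type, Finset.mul_sum]
  simp only [Finset.mul_sum]

lemma flowState_mem_orthogonal_symSpan (hw : ∀ x y, w x y = w y x) (E : Set (V × V)) :
    flowState w v s ∈ (symSpan E)ᗮ := by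
  refine mem_orthogonal_span_of_inner_eq_zero ?_
  rintro _ ⟨p, -, rfl⟩
  rw [inner_add_left, inner_ket_left, inner_ket_left, flowState_apply, flowState_apply,
    ← Complex.ofReal_add, Prod.fst_swap, Prod.snd_swap, hw p.2 p.1]
  norm_cast
  ring

end FlowState

end Elfs

theorem stmt6_general {V : Type*} [Fintype V] [DecidableEq V]
    (E : Set (V × V)) (w : V → V → ℝ) (s : V) (M : Finset V)
    (hw0 : ∀ x y, 0 ≤ w x y) (hwsymm : ∀ x y, w x y = w y x)
    (hdeg : ∀ x, 0 < deg w x)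
    (hsM : s ∉ M)
    (v : V → ℝ) (hvM : ∀ y ∈ M, v y = 0) (hRpos : 0 < v s)
    (hunit : ∑ y, w s y * (v s - v y) = 1)
    (hcons : ∀ x, x ≠ s → x ∉ M → ∑ y, w x y * (v x - v y) = 0) :
    ‖flowState w v s‖ = 1 ∧
    projSym E (flowState w v s) = 0 ∧
    ⟪starState w s, flowState w v s⟫_ℂ =
      (((Real.sqrt (2 * v s * deg w s))⁻¹ : ℝ) : ℂ) ∧
    (∀ x, x ≠ s → x ∉ M → ⟪starState w x, flowState w v s⟫_ℂ = 0) ∧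
    ∑ m ∈ M, ((Real.sqrt (deg w m) : ℝ) : ℂ) * ⟪starState w m, flowState w v s⟫_ℂ =
      ((-(Real.sqrt (2 * v s))⁻¹ : ℝ) : ℂ) := by
  have henergy : ∑ x, ∑ y, w x y * (v x - v y) ^ 2 = 2 * v s := by
    rw [sum_sum_mul_sub_sq_eq_two_mul_sum hwsymm, sum_mul_netFlow_eq hvM hunit hcons]
  refine ⟨?_, projSym_eq_zero_of_mem_orthogonal (flowState_mem_orthogonal_symSpan hwsymm E),
    ?_, fun x hxs hxM => ?_, ?_⟩
  · rw [← pow_eq_one_iff_of_nonneg (norm_nonneg _) two_ne_zero, norm_flowState_sq hw0 hRpos.le,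
      henergy, inv_mul_cancel₀ (by positivity)]
  · rw [inner_starState_flowState hw0, netFlow, hunit, mul_one,
      Real.sqrt_mul (by positivity : (0 : ℝ) ≤ 2 * v s), mul_inv, mul_comm]
  · rw [inner_starState_flowState hw0, netFlow, hcons x hxs hxM, mul_zero, Complex.ofReal_zero]
  · rw [Finset.sum_congr rfl fun m _ => sqrt_deg_mul_inner_starState_flowState hw0 (hdeg m),
      ← Complex.ofReal_sum, ← Finset.mul_sum, sum_netFlow_sink_eq_neg_one hwsymm hsM hunit hcons,
      mul_neg_one]

/-- Basic properties of the electric flow state. -/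
theorem stmt6 {V : Type*} [Fintype V] [DecidableEq V]
    (E : Set (V × V)) (w : V → V → ℝ) (s : V) (M : Finset V)
    (hE : ∀ p : V × V, p ∈ E ↔ p.swap ∈ E)
    (hw0 : ∀ x y, 0 ≤ w x y) (hwsymm : ∀ x y, w x y = w y x)
    (hwE : ∀ x y, (x, y) ∉ E → w x y = 0)
    (hdeg : ∀ x, 0 < deg w x)
    (hM : M.Nonempty) (hsM : s ∉ M)
    (v : V → ℝ) (hvM : ∀ y ∈ M, v y = 0) (hRpos : 0 < v s)
    (hunit : ∑ y, w s y * (v s - v y) = 1)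
    (hcons : ∀ x, x ≠ s → x ∉ M → ∑ y, w x y * (v x - v y) = 0) :
    ‖flowState w v s‖ = 1 ∧
    projSym E (flowState w v s) = 0 ∧
    ⟪starState w s, flowState w v s⟫_ℂ =
      (((Real.sqrt (2 * v s * deg w s))⁻¹ : ℝ) : ℂ) ∧
    (∀ x, x ≠ s → x ∉ M → ⟪starState w x, flowState w v s⟫_ℂ = 0) ∧
    ∑ m ∈ M, ((Real.sqrt (deg w m) : ℝ) : ℂ) * ⟪starState w m, flowState w v s⟫_ℂ =
      ((-(Real.sqrt (2 * v s))⁻¹ : ℝ) : ℂ) :=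
  stmt6_general E w s M hw0 hwsymm hdeg hsM v hvM hRpos hunit hcons
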